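/- The matrix-vector action is well-defined on equivalence classes: if A ∈ ℝ^{m×n}, x ∈ ℝ^r, x' = x ⊗ 1_s, and A ⃗∘ y := (A ⊗ J_{t/n})(y ⊗ 1_{t/r}) with t = lcm(n, dim y), then (A ⃗∘ x) ↔ (A ⃗∘ x'). -/

import Mathlib

open Matrix

noncomputable section

/-- All-ones vector in `ℝ^k`. -/
def ones (k : ℕ) : Fin k → ℝ := fun _ => 1

/-- Kronecker product of two vectors (column vectors). -/
def vkron {m k : ℕ} (x : Fin m → ℝ) (y : Fin k → ℝ) : Fin (m * k) → ℝ :=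
  fun i => x (finProdFinEquiv.symm i).1 * y (finProdFinEquiv.symm i).2

/-- `J_k`: the `k × k` matrix all of whose entries are `1/k`. -/
def Jmat (k : ℕ) : Matrix (Fin k) (Fin k) ℝ := Matrix.of fun _ _ => (k : ℝ)⁻¹

/-- Kronecker product of matrices. -/
def mkron {m n p q : ℕ} (A : Matrix (Fin m) (Fin n) ℝ) (B : Matrix (Fin p) (Fin q) ℝ) :
    Matrix (Fin (m * p)) (Fin (n * q)) ℝ :=
  Matrix.of fun i j =>
    A (finProdFinEquiv.symm i).1 (finProdFinEquiv.symm j).1 *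
    B (finProdFinEquiv.symm i).2 (finProdFinEquiv.symm j).2

/-- Mixed-dimensional vectors. -/
def MVec := Σ n : ℕ, Fin n → ℝ

/-- Vector equivalence: `x ↔ y` iff `x ⊗ 1_α = y ⊗ 1_β` for some `α, β ≥ 1`. -/
def vequiv (x y : MVec) : Prop :=
  ∃ α β : ℕ, 0 < α ∧ 0 < β ∧ ∃ h : x.1 * α = y.1 * β,
    ∀ i, vkron x.2 (ones α) i = vkron y.2 (ones β) (Fin.cast h i)


/-- The action `A ⃗∘ y := (A ⊗ J_{t/n})(y ⊗ 1_{t/r})`, `t = lcm(n, r)`. -/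
def maction {m n r : ℕ} (A : Matrix (Fin m) (Fin n) ℝ) (y : Fin r → ℝ) :
    Fin (m * (Nat.lcm n r / n)) → ℝ :=
  if h : n * (Nat.lcm n r / n) = r * (Nat.lcm n r / r) then
    (mkron A (Jmat (Nat.lcm n r / n))).mulVec
      (fun j => vkron y (ones (Nat.lcm n r / r)) (Fin.cast h j))
  else 0

/-!
With `t = lcm(n, r) = n p = r q`, entry `(u, a)` of `A ⃗∘ y` is `p⁻¹ ∑_{j<t} A_{u,⌊j/p⌋} y_{⌊j/q⌋}`,
independent of `a`: `A ⃗∘ y` is a row vector stretched by `1_p`. Replacing `t` by a multiple `t d`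
repeats every summand `d` times while `p` becomes `p d`, so the row is the same for every common
multiple of `n` and `r`. Since `(x ⊗ 1_s)_{⌊j/q'⌋} = x_{⌊j/(q' s)⌋}` for any `q'`, and
`lcm(n, r) ∣ lcm(n, r s)`, `A ⃗∘ x` and `A ⃗∘ (x ⊗ 1_s)` are stretchings of one row, hence equivalent.
-/

open Finset

lemma vkron_ones_apply {m k : ℕ} (x : Fin m → ℝ) (i : Fin (m * k)) :
    vkron x (ones k) i = x i.divNat := by
  simp [vkron, ones]

lemma vequiv_vkron_ones {m a b : ℕ} (ha : 0 < a) (hb : 0 < b) (f : Fin m → ℝ) :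
    vequiv ⟨m * a, vkron f (ones a)⟩ ⟨m * b, vkron f (ones b)⟩ := by
  refine ⟨b, a, hb, ha, by ring, fun i => ?_⟩
  simp only [vkron_ones_apply]
  congr 1
  ext
  simp only [Fin.coe_divNat, Fin.val_cast, Nat.div_div_eq_div_mul, mul_comm a b]

def extendByZero {α : Type*} [Zero α] {r : ℕ} (x : Fin r → α) (k : ℕ) : α :=
  if h : k < r then x ⟨k, h⟩ else 0

@[simp]
lemma extendByZero_val {α : Type*} [Zero α] {r : ℕ} (x : Fin r → α) (i : Fin r) :
    extendByZero x i = x i := by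
  simp [extendByZero]

lemma extendByZero_vkron_ones {r s : ℕ} (hs : 0 < s) (x : Fin r → ℝ) (k : ℕ) :
    extendByZero (vkron x (ones s)) k = extendByZero x (k / s) := by
  by_cases hk : k < r * s
  · have hks : k / s < r := (Nat.div_lt_iff_lt_mul hs).2 hk
    simp only [extendByZero, hk, hks, dif_pos, vkron_ones_apply]
    rfl
  · have hks : ¬ k / s < r := by rwa [Nat.div_lt_iff_lt_mul hs]
    simp only [extendByZero, hk, hks, dif_neg, not_false_eq_true]

lemma sum_range_mul_div {M : Type*} [AddCommMonoid M] (f : ℕ → M) (T d : ℕ) :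
    ∑ j ∈ range (T * d), f (j / d) = d • ∑ j ∈ range T, f j := by
  induction T with
  | zero => simp
  | succ T ih =>
    rcases Nat.eq_zero_or_pos d with rfl | hd
    · simp
    have hblock : ∀ k ∈ range d, f ((T * d + k) / d) = f T := fun k hk => by
      rw [Nat.mul_comm, Nat.mul_add_div hd, Nat.div_eq_of_lt (mem_range.1 hk), add_zero]
    rw [Nat.succ_mul, sum_range_add, ih, sum_congr rfl hblock, sum_range_succ, smul_add]
    simp

def stretchDot {n r : ℕ} (a : Fin n → ℝ) (y : Fin r → ℝ) (T : ℕ) : ℝ :=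
  ∑ j ∈ range T, extendByZero a (j / (T / n)) * extendByZero y (j / (T / r))

lemma stretchDot_mul {n r T : ℕ} (hn : n ∣ T) (hr : r ∣ T) (a : Fin n → ℝ) (y : Fin r → ℝ)
    (d : ℕ) : stretchDot a y (T * d) = d * stretchDot a y T := by
  set F : ℕ → ℝ := fun j => extendByZero a (j / (T / n)) * extendByZero y (j / (T / r))
  calc stretchDot a y (T * d) = ∑ j ∈ range (T * d), F (j / d) := by
        refine sum_congr rfl fun j _ => ?_
        simp only [F, Nat.div_div_eq_div_mul, ← Nat.div_mul_right_comm hn,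
          ← Nat.div_mul_right_comm hr, mul_comm d]
    _ = d • stretchDot a y T := sum_range_mul_div F T d
    _ = d * stretchDot a y T := nsmul_eq_mul _ _

lemma stretchDot_vkron_ones {n r s T : ℕ} (hs : 0 < s) (hrs : r * s ∣ T) (a : Fin n → ℝ)
    (y : Fin r → ℝ) : stretchDot a (vkron y (ones s)) T = stretchDot a y T := by
  have hq : T / (r * s) * s = T / r := by
    rw [Nat.div_mul_right_comm hrs, Nat.mul_div_mul_right _ _ hs]
  simp only [stretchDot, extendByZero_vkron_ones hs, Nat.div_div_eq_div_mul, hq]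

def mactionRow {m n r : ℕ} (A : Matrix (Fin m) (Fin n) ℝ) (y : Fin r → ℝ) : Fin m → ℝ :=
  fun u => ((Nat.lcm n r / n : ℕ) : ℝ)⁻¹ * stretchDot (A u) y (Nat.lcm n r)

lemma maction_eq_vkron_mactionRow {m n r : ℕ} (A : Matrix (Fin m) (Fin n) ℝ) (y : Fin r → ℝ) :
    maction A y = vkron (mactionRow A y) (ones (Nat.lcm n r / n)) := by
  have hnp : n * (Nat.lcm n r / n) = Nat.lcm n r := Nat.mul_div_cancel' (Nat.dvd_lcm_left n r)
  have hrq : r * (Nat.lcm n r / r) = Nat.lcm n r := Nat.mul_div_cancel' (Nat.dvd_lcm_right n r)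
  have hc : n * (Nat.lcm n r / n) = r * (Nat.lcm n r / r) := hnp.trans hrq.symm
  funext i
  rw [maction, dif_pos hc, Matrix.mulVec, dotProduct, vkron_ones_apply, mactionRow, stretchDot,
    sum_range, mul_sum]
  refine Fintype.sum_equiv (finCongr hnp) _ _ fun j => ?_
  have hA : extendByZero (A i.divNat) ((finCongr hnp j : ℕ) / (Nat.lcm n r / n)) =
      A i.divNat j.divNat := by
    rw [finCongr_apply, Fin.val_cast, ← Fin.coe_divNat, extendByZero_val]
  have hy : extendByZero y ((finCongr hnp j : ℕ) / (Nat.lcm n r / r)) =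
      y (Fin.cast hc j).divNat := by
    rw [finCongr_apply, Fin.val_cast, ← Fin.val_cast hc, ← Fin.coe_divNat, extendByZero_val]
  simp only [mkron, Jmat, Matrix.of_apply, finProdFinEquiv_symm_apply, vkron_ones_apply, hA, hy]
  ring

lemma mactionRow_vkron_ones {m n r s : ℕ} (hn : 0 < n) (hr : 0 < r) (hs : 0 < s)
    (A : Matrix (Fin m) (Fin n) ℝ) (x : Fin r → ℝ) :
    mactionRow A (vkron x (ones s)) = mactionRow A x := by
  obtain ⟨d, hd⟩ : Nat.lcm n r ∣ Nat.lcm n (r * s) :=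
    Nat.lcm_dvd (Nat.dvd_lcm_left n _) ((Nat.dvd_mul_right r s).trans (Nat.dvd_lcm_right n _))
  have hpd : Nat.lcm n (r * s) / n = Nat.lcm n r / n * d := by
    rw [hd, Nat.div_mul_right_comm (Nat.dvd_lcm_left n r)]
  have hd0 : (d : ℝ) ≠ 0 :=
    Nat.cast_ne_zero.2 (right_ne_zero_of_mul (hd ▸ (Nat.lcm_pos hn (Nat.mul_pos hr hs)).ne'))
  funext u
  rw [mactionRow, mactionRow, stretchDot_vkron_ones hs (Nat.dvd_lcm_right n _), hpd, hd,
    stretchDot_mul (Nat.dvd_lcm_left n r) (Nat.dvd_lcm_right n r), Nat.cast_mul]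
  field_simp

theorem maction_well_defined_general (m n r s : ℕ)
    (hn : 0 < n) (hr : 0 < r) (hs : 0 < s)
    (A : Matrix (Fin m) (Fin n) ℝ) (x : Fin r → ℝ) :
    vequiv ⟨m * (Nat.lcm n r / n), maction A x⟩
           ⟨m * (Nat.lcm n (r * s) / n), maction A (vkron x (ones s))⟩ := by
  have hp : 0 < Nat.lcm n r / n :=
    Nat.div_pos (Nat.le_of_dvd (Nat.lcm_pos hn hr) (Nat.dvd_lcm_left n r)) hn
  have hp' : 0 < Nat.lcm n (r * s) / n :=
    Nat.div_pos (Nat.le_of_dvd (Nat.lcm_pos hn (Nat.mul_pos hr hs)) (Nat.dvd_lcm_left n _)) hn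
  rw [maction_eq_vkron_mactionRow, maction_eq_vkron_mactionRow, mactionRow_vkron_ones hn hr hs]
  exact vequiv_vkron_ones hp hp' _

/-- the matrix-vector action is well defined on vector
equivalence classes: `(A ⃗∘ x) ↔ (A ⃗∘ (x ⊗ 1_s))`. -/
theorem maction_well_defined (m n r s : ℕ)
    (hm : 0 < m) (hn : 0 < n) (hr : 0 < r) (hs : 0 < s)
    (A : Matrix (Fin m) (Fin n) ℝ) (x : Fin r → ℝ) :
    vequiv ⟨m * (Nat.lcm n r / n), maction A x⟩
           ⟨m * (Nat.lcm n (r * s) / n), maction A (vkron x (ones s))⟩ :=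
  maction_well_defined_general m n r s hn hr hs A x
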